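/- arXiv:1807.01847 — 2 statements merged into one kernel-verified Lean document; each statement's English description precedes it below -/
import Mathlib

section
/- For μ > 0 and u in C_0^∞(ℝ), the left and right Riemann–Liouville fractional derivatives D^μ u and D^{μ*}u belong to L^p(ℝ) for every 1 ≤ p < ∞. -/
open MeasureTheory Filter Set
open scoped FourierTransform Real Topology ENNReal Classical

/-- Smooth compactly supported real-valued functions: `C_0^∞(ℝ)`. -/
def IsC0inf (ψ : ℝ → ℝ) : Prop := ContDiff ℝ (⊤ : ℕ∞) ψ ∧ HasCompactSupport ψ

/-- Left Riemann–Liouville fractional integral of order `σ`: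
`D^{-σ}u(x) = Γ(σ)⁻¹ ∫_{-∞}^x (x-t)^{σ-1} u(t) dt`. -/
noncomputable def RLl (σ : ℝ) (u : ℝ → ℝ) (x : ℝ) : ℝ :=
  (Real.Gamma σ)⁻¹ * ∫ t in Set.Iic x, Real.rpow (x - t) (σ - 1) * u t

/-- Right Riemann–Liouville fractional integral of order `σ`:
`D^{-σ*}u(x) = Γ(σ)⁻¹ ∫_x^∞ (t-x)^{σ-1} u(t) dt`. -/
noncomputable def RLr (σ : ℝ) (u : ℝ → ℝ) (x : ℝ) : ℝ :=
  (Real.Gamma σ)⁻¹ * ∫ t in Set.Ici x, Real.rpow (t - x) (σ - 1) * u t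

/-- Left Riemann–Liouville fractional derivative of order `μ > 0`, with
`n = ⌊μ⌋ + 1` (so `n - 1 ≤ μ < n`): `D^μ u = (d/dx)^n D^{-(n-μ)} u`. -/
noncomputable def RLdL (μ : ℝ) (u : ℝ → ℝ) : ℝ → ℝ :=
  deriv^[Nat.floor μ + 1] (RLl ((Nat.floor μ + 1 : ℕ) - μ) u)

/-- Right Riemann–Liouville fractional derivative of order `μ > 0`:
`D^{μ*} u = (-1)^n (d/dx)^n D^{-(n-μ)*} u` with `n = ⌊μ⌋ + 1`. -/
noncomputable def RLdR (μ : ℝ) (u : ℝ → ℝ) : ℝ → ℝ := fun x =>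
  (-1 : ℝ) ^ (Nat.floor μ + 1) * deriv^[Nat.floor μ + 1] (RLr ((Nat.floor μ + 1 : ℕ) - μ) u) x

/-- The complex power `(2πiξ)^σ`, understood as `|2πξ|^σ e^{σπi·sign(ξ)/2}`. -/
noncomputable def cpowP (ξ σ : ℝ) : ℂ :=
  ((|2 * Real.pi * ξ| ^ σ : ℝ) : ℂ) *
    Complex.exp ((σ * Real.pi * Real.sign ξ / 2 : ℝ) * Complex.I)

/-- The complex power `(-2πiξ)^σ`, understood as `|2πξ|^σ e^{-σπi·sign(ξ)/2}`. -/
noncomputable def cpowM (ξ σ : ℝ) : ℂ :=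
  ((|2 * Real.pi * ξ| ^ σ : ℝ) : ℂ) *
    Complex.exp (-(σ * Real.pi * Real.sign ξ / 2 : ℝ) * Complex.I)

/-- The Plancherel (L²) Fourier transform of a real-valued function, defined as the
L² limit of the Fourier integrals of truncations (and junk value `0` if no such limit
exists, e.g. if `w ∉ L²`). -/
noncomputable def planch (w : ℝ → ℝ) : ℝ → ℂ :=
  if h : ∃ g : ℝ → ℂ, MemLp g 2 (volume : Measure ℝ) ∧
      Tendsto (fun R : ℝ => eLpNorm
          (fun ξ => 𝓕 (Set.indicator (Set.Icc (-R) R) (fun y => (w y : ℂ))) ξ - g ξ)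
          2 volume) atTop (𝓝 0)
  then h.choose else 0

/-- Membership in the Sobolev space `Ĥ^μ(ℝ)` defined via the Fourier (Plancherel)
transform: `w ∈ L²` and `∫ (1+|2πξ|^{2μ}) |ŵ(ξ)|² dξ < ∞`. -/
noncomputable def MemHhat (μ : ℝ) (w : ℝ → ℝ) : Prop :=
  MemLp w 2 (volume : Measure ℝ) ∧
    Integrable (fun ξ : ℝ => (1 + |2 * Real.pi * ξ| ^ (2 * μ)) * ‖planch w ξ‖ ^ 2)

/-- `w` is the weak left fractional derivative of order `μ` of `u`:
`(u, D^{μ*}ψ) = (w, ψ)` for all test functions `ψ ∈ C_0^∞(ℝ)`. -/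
def IsWeakLeftD (μ : ℝ) (u w : ℝ → ℝ) : Prop :=
  ∀ ψ : ℝ → ℝ, IsC0inf ψ → ∫ x : ℝ, u x * RLdR μ ψ x = ∫ x : ℝ, w x * ψ x

/-- `w` is the weak right fractional derivative of order `μ` of `u`:
`(u, D^{μ}ψ) = (w, ψ)` for all test functions `ψ ∈ C_0^∞(ℝ)`. -/
def IsWeakRightD (μ : ℝ) (u w : ℝ → ℝ) : Prop :=
  ∀ ψ : ℝ → ℝ, IsC0inf ψ → ∫ x : ℝ, u x * RLdL μ ψ x = ∫ x : ℝ, w x * ψ x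

open scoped Convolution ContDiff

noncomputable def Kr (σ : ℝ) : ℝ → ℝ := Set.indicator (Set.Ioi 0) (fun s => s ^ (σ - 1))

lemma Kr_locInt {σ : ℝ} (hσ : 0 < σ) : LocallyIntegrable (Kr σ) volume := by
  rw [MeasureTheory.locallyIntegrable_iff]
  intro k hk
  obtain ⟨M, hM⟩ := hk.isBounded.subset_closedBall 0
  have h1 : IntegrableOn (fun s : ℝ => s ^ (σ - 1)) (Ioc 0 (max M 1)) volume := by
    have := intervalIntegral.intervalIntegrable_rpow' (a := 0) (b := max M 1)
      (r := σ - 1) (by linarith)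
    rwa [intervalIntegrable_iff_integrableOn_Ioc_of_le (by positivity)] at this
  have h2 : IntegrableOn (Kr σ) (Ioc 0 (max M 1)) volume := by
    apply h1.congr_fun _ measurableSet_Ioc
    intro x hx
    simp [Kr, Set.indicator_of_mem (show x ∈ Ioi 0 from hx.1)]
  have h3 : IntegrableOn (Kr σ) (Iic 0) volume := by
    apply (integrableOn_zero).congr_fun _ measurableSet_Iic
    intro x hx
    simp [Kr, Set.indicator_of_notMem (show x ∉ Ioi 0 by simpa using hx)]
  apply (h3.union h2).mono_set
  intro x hx
  rcases le_or_gt x 0 with h | h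
  · exact Or.inl h
  · exact Or.inr ⟨h, le_trans (le_trans (le_abs_self x) (by simpa [Real.norm_eq_abs, Metric.mem_closedBall, Real.dist_eq] using hM hx)) (le_max_left _ _)⟩

lemma RLl_eq_conv (σ : ℝ) (v : ℝ → ℝ) :
    RLl σ v = fun x => (Real.Gamma σ)⁻¹ * (Kr σ ⋆[ContinuousLinearMap.lsmul ℝ ℝ] v) x := by
  funext x
  unfold RLl
  congr 1
  have h1 : ∫ t in Set.Iic x, Real.rpow (x - t) (σ - 1) * v t
      = ∫ t in Set.Iic x, Kr σ (x - t) * v t := by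
    apply setIntegral_congr_ae measurableSet_Iic
    filter_upwards [compl_mem_ae_iff.2 (measure_singleton x)] with t ht hle
    have htx : t < x := lt_of_le_of_ne hle (by simpa [Set.mem_singleton_iff] using ht)
    have hk : Kr σ (x - t) = (x - t) ^ (σ - 1) :=
      Set.indicator_of_mem (show x - t ∈ Ioi 0 by simp [htx]) _
    rw [hk]; rfl
  have h2 : ∫ t in Set.Iic x, Kr σ (x - t) * v t = ∫ t, Kr σ (x - t) * v t := by
    apply setIntegral_eq_integral_of_forall_compl_eq_zero
    intro t ht
    have : x - t < 0 := by simpa using not_le.mp (by simpa using ht)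
    simp [Kr, Set.indicator_of_notMem (show x - t ∉ Ioi 0 by simp; linarith)]
  rw [h1, h2]
  have h3 : (fun t => Kr σ (x - t) * v t) = fun t => (fun s => Kr σ s * v (x - s)) (x - t) := by
    funext t; simp
  rw [h3, integral_sub_left_eq_self (fun s => Kr σ s * v (x - s)) volume x]
  rfl

lemma iterDeriv_conv {σ : ℝ} (hσ : 0 < σ) (m : ℕ) :
    ∀ v : ℝ → ℝ, ContDiff ℝ ∞ v → HasCompactSupport v →
    deriv^[m] (Kr σ ⋆[ContinuousLinearMap.lsmul ℝ ℝ] v)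
      = Kr σ ⋆[ContinuousLinearMap.lsmul ℝ ℝ] (deriv^[m] v) := by
  induction m with
  | zero => intro v _ _; rfl
  | succ m ih =>
    intro v hv hcv
    have h1 : deriv (Kr σ ⋆[ContinuousLinearMap.lsmul ℝ ℝ] v)
        = Kr σ ⋆[ContinuousLinearMap.lsmul ℝ ℝ] (deriv v) := by
      funext x
      exact (HasCompactSupport.hasDerivAt_convolution_right _ (Kr_locInt hσ) hcv
        (hv.of_le (by exact_mod_cast le_top)) x).deriv
    rw [Function.iterate_succ, Function.comp_def]
    simp only []
    calc deriv^[m] (deriv (Kr σ ⋆[ContinuousLinearMap.lsmul ℝ ℝ] v))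
        = deriv^[m] (Kr σ ⋆[ContinuousLinearMap.lsmul ℝ ℝ] (deriv v)) := by rw [h1]
      _ = Kr σ ⋆[ContinuousLinearMap.lsmul ℝ ℝ] (deriv^[m] (deriv v)) :=
          ih (deriv v) ((contDiff_infty_iff_deriv.mp hv).2) hcv.deriv
      _ = Kr σ ⋆[ContinuousLinearMap.lsmul ℝ ℝ] (deriv^[m + 1] v) := by
          rw [Function.iterate_succ, Function.comp_def]

lemma iterDeriv_const_mul (c : ℝ) (m : ℕ) :
    ∀ F : ℝ → ℝ, deriv^[m] (fun x => c * F x) = fun x => c * deriv^[m] F x := by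
  induction m with
  | zero => intro F; rfl
  | succ m ih =>
    intro F
    rw [Function.iterate_succ, Function.comp_def]
    have h1 : deriv (fun x => c * F x) = fun x => c * deriv F x := by
      funext x; exact deriv_const_mul_field c
    calc deriv^[m] (deriv fun x => c * F x)
        = deriv^[m] (fun x => c * deriv F x) := by rw [h1]
      _ = fun x => c * deriv^[m] (deriv F) x := ih (deriv F)
      _ = fun x => c * deriv^[m+1] F x := by
          rw [Function.iterate_succ, Function.comp_def]

lemma iterDeriv_comp_neg (m : ℕ) (f : ℝ → ℝ) :
    deriv^[m] (fun x => f (-x)) = fun x => (-1 : ℝ)^m * deriv^[m] f (-x) := by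
  induction m generalizing f with
  | zero => simp
  | succ m ih =>
    funext x
    rw [Function.iterate_succ_apply' deriv m (fun x => f (-x)), ih f,
      Function.iterate_succ_apply' deriv m f,
      deriv_const_mul_field ((-1:ℝ)^m), deriv_comp_neg]
    ring

lemma rpow_diff_bound {σ a b : ℝ} (ha0 : 0 < a) (hσ1 : σ ≤ 1) (hab : a ≤ b) :
    ∀ t ∈ Icc a b, |t ^ (σ - 1) - a ^ (σ - 1)| ≤ (1 - σ) * a ^ (σ - 2) * (b - a) := by
  intro t ht
  have hder : ∀ s ∈ Icc a b,
      HasDerivWithinAt (fun s : ℝ => s ^ (σ - 1)) ((σ - 1) * s ^ (σ - 1 - 1)) (Icc a b) s :=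
    fun s hs => (Real.hasDerivAt_rpow_const
      (Or.inl (by nlinarith [hs.1] : s ≠ 0))).hasDerivWithinAt
  have hbd : ∀ s ∈ Icc a b, ‖(σ - 1) * s ^ (σ - 1 - 1)‖ ≤ (1 - σ) * a ^ (σ - 2) := by
    intro s hs
    have hs0 : 0 < s := lt_of_lt_of_le ha0 hs.1
    rw [Real.norm_eq_abs, abs_mul, abs_of_nonneg (Real.rpow_nonneg hs0.le _),
      abs_of_nonpos (by linarith : σ - 1 ≤ 0)]
    have h2 : s ^ (σ - 1 - 1) ≤ a ^ (σ - 2) := by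
      rw [show σ - 1 - 1 = σ - 2 by ring]
      exact Real.rpow_le_rpow_of_nonpos ha0 hs.1 (by linarith)
    nlinarith [Real.rpow_nonneg hs0.le (σ - 1 - 1)]
  have key := (convex_Icc a b).norm_image_sub_le_of_norm_hasDerivWithin_le
    hder hbd (left_mem_Icc.mpr hab) ht
  rw [Real.norm_eq_abs, Real.norm_eq_abs] at key
  calc |t ^ (σ - 1) - a ^ (σ - 1)| ≤ (1 - σ) * a ^ (σ - 2) * |t - a| := key
    _ ≤ (1 - σ) * a ^ (σ - 2) * (b - a) := by
        apply mul_le_mul_of_nonneg_left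
        · rw [abs_of_nonneg (by linarith [ht.1])]; linarith [ht.2]
        · exact mul_nonneg (by linarith) (Real.rpow_nonneg ha0.le _)

lemma conv_decay {σ : ℝ} (hσ0 : 0 < σ) (hσ1 : σ ≤ 1) (w : ℝ → ℝ)
    (hw : ContDiff ℝ ∞ w) (hcw : HasCompactSupport w) :
    ∃ C r : ℝ, 0 ≤ C ∧ 1 < r ∧ ∀ x : ℝ,
      |(Kr σ ⋆[ContinuousLinearMap.lsmul ℝ ℝ] deriv w) x| ≤ C * (1 + |x|) ^ (-r) := by
  set v := deriv w with hv
  set G := Kr σ ⋆[ContinuousLinearMap.lsmul ℝ ℝ] v with hGdefn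
  have hvsmooth : ContDiff ℝ ∞ v := (contDiff_infty_iff_deriv.mp hw).2
  have hcv : HasCompactSupport v := hcw.deriv
  have hGcont : Continuous G :=
    (hcv.contDiff_convolution_right (ContinuousLinearMap.lsmul ℝ ℝ)
      (Kr_locInt hσ0) hvsmooth).continuous
  have hGdef : ∀ x, G x = ∫ t, Kr σ t * v (x - t) := by
    intro x
    simp only [hGdefn, MeasureTheory.convolution_def, ContinuousLinearMap.lsmul_apply,
      smul_eq_mul]
  obtain ⟨M, hM⟩ := hcw.isBounded.subset_closedBall 0
  set P : ℝ := max M 0 with hP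
  set R : ℝ := P + 1 with hR
  have hP0 : 0 ≤ P := le_max_right _ _
  have hR1 : 1 ≤ R := by simp [hR]; linarith
  have hwz : ∀ y : ℝ, P < |y| → w y = 0 := by
    intro y hy
    apply image_eq_zero_of_notMem_tsupport
    intro hmem
    have := hM hmem
    simp only [Metric.mem_closedBall, Real.dist_eq, sub_zero] at this
    have : |y| ≤ P := le_trans this (le_max_left _ _)
    linarith
  have hvz : ∀ y : ℝ, P < |y| → v y = 0 := by
    intro y hy
    by_contra h
    have : y ∈ tsupport w := support_deriv_subset (by simpa [hv] using h)
    have := hM this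
    simp only [Metric.mem_closedBall, Real.dist_eq, sub_zero] at this
    have : |y| ≤ P := le_trans this (le_max_left _ _)
    linarith
  obtain ⟨Mv, hMv⟩ := hcv.exists_bound_of_continuous hvsmooth.continuous
  have hMv0 : 0 ≤ Mv := le_trans (norm_nonneg (v 0)) (hMv 0)
  -- tail bound
  have tail : ∀ x : ℝ, 2 * R + 2 ≤ x →
      |G x| ≤ (1 - σ) * (16 * R ^ 2 * Mv) * (1 + x) ^ (σ - 2) := by
    intro x hx
    set a : ℝ := x - R with ha
    set b : ℝ := x + R with hb
    have hab : a ≤ b := by simp [ha, hb]; linarith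
    have ha0 : 0 < a := by simp [ha]; nlinarith
    have hvcont : Continuous fun t : ℝ => v (x - t) :=
      hvsmooth.continuous.comp (continuous_const.sub continuous_id)
    have hrpowcont : ContinuousOn (fun t : ℝ => t ^ (σ - 1)) (Icc a b) := by
      intro t ht
      exact (Real.continuousAt_rpow_const t _ (Or.inl (by nlinarith [ht.1] : t ≠ 0))).continuousWithinAt
    have h1 : G x = ∫ t in Icc a b, Kr σ t * v (x - t) := by
      rw [hGdef x]
      refine (setIntegral_eq_integral_of_forall_compl_eq_zero ?_).symm
      intro t ht
      simp only [mem_Icc, not_and_or, not_le] at ht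
      have : v (x - t) = 0 := by
        apply hvz
        rcases ht with h | h
        · rw [abs_of_pos (by simp [ha] at h; linarith : (0:ℝ) < x - t)]
          simp [ha] at h; linarith [hR1]
        · rw [abs_of_neg (by simp [hb] at h; linarith : x - t < 0)]
          simp [hb] at h; linarith [hR1]
      simp [this]
    have h2 : ∫ t in Icc a b, Kr σ t * v (x - t)
        = ∫ t in Icc a b, t ^ (σ - 1) * v (x - t) := by
      apply setIntegral_congr_fun measurableSet_Icc
      intro t ht
      have hkr : Kr σ t = t ^ (σ - 1) :=
        Set.indicator_of_mem (show t ∈ Ioi 0 from lt_of_lt_of_le ha0 ht.1) _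
      dsimp only
      rw [hkr]
    have h3 : ∫ t in Icc a b, v (x - t) = 0 := by
      rw [integral_Icc_eq_integral_Ioc, ← intervalIntegral.integral_of_le hab,
        intervalIntegral.integral_comp_sub_left (fun s => v s) x]
      have e1 : x - b = -R := by simp [hb]
      have e2 : x - a = R := by simp [ha]
      rw [e1, e2]
      have : ∫ s in (-R)..R, v s = w R - w (-R) := by
        apply intervalIntegral.integral_deriv_eq_sub
        · intro y _
          exact (hw.differentiable (by simp)) y
        · exact (hvsmooth.continuous.intervalIntegrable _ _)
      rw [this, hwz R (by rw [abs_of_pos (by linarith)]; linarith),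
        hwz (-R) (by rw [abs_of_neg (by linarith)]; simp; linarith), sub_zero]
    have i1 : IntegrableOn (fun t => t ^ (σ - 1) * v (x - t)) (Icc a b) volume :=
      (hrpowcont.mul hvcont.continuousOn).integrableOn_compact isCompact_Icc
    have i2 : IntegrableOn (fun t => a ^ (σ - 1) * v (x - t)) (Icc a b) volume :=
      (continuous_const.mul hvcont).continuousOn.integrableOn_compact isCompact_Icc
    have h4 : G x = ∫ t in Icc a b, (t ^ (σ - 1) - a ^ (σ - 1)) * v (x - t) := by
      have : ∫ t in Icc a b, (t ^ (σ - 1) - a ^ (σ - 1)) * v (x - t)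
          = (∫ t in Icc a b, t ^ (σ - 1) * v (x - t))
            - ∫ t in Icc a b, a ^ (σ - 1) * v (x - t) := by
        rw [← integral_sub i1 i2]
        congr 1; funext t; ring
      rw [this, integral_const_mul, h3, mul_zero, sub_zero, h1, h2]
    -- MVT bound
    have hderivbd : ∀ t ∈ Icc a b,
        |t ^ (σ - 1) - a ^ (σ - 1)| ≤ (1 - σ) * a ^ (σ - 2) * (2 * R) := by
      intro t ht
      have := rpow_diff_bound ha0 hσ1 hab t ht
      have hba : b - a = 2 * R := by simp [ha, hb]; ring
      rwa [hba] at this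
    have h5 : |G x| ≤ ((1 - σ) * a ^ (σ - 2) * (2 * R) * Mv) * (2 * R) := by
      rw [h4, ← Real.norm_eq_abs]
      have vol : volume (Icc a b) < ⊤ := measure_Icc_lt_top
      have hptw : ∀ t ∈ Icc a b,
          ‖(t ^ (σ - 1) - a ^ (σ - 1)) * v (x - t)‖
            ≤ (1 - σ) * a ^ (σ - 2) * (2 * R) * Mv := by
        intro t ht
        rw [Real.norm_eq_abs, abs_mul]
        calc |t ^ (σ - 1) - a ^ (σ - 1)| * |v (x - t)|
            ≤ ((1 - σ) * a ^ (σ - 2) * (2 * R)) * Mv :=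
              mul_le_mul (hderivbd t ht) (by simpa using hMv (x - t))
                (abs_nonneg _) (le_trans (abs_nonneg _) (hderivbd t ht))
          _ = (1 - σ) * a ^ (σ - 2) * (2 * R) * Mv := by ring
      have key := norm_setIntegral_le_of_norm_le_const (μ := volume) (s := Icc a b)
        (C := (1 - σ) * a ^ (σ - 2) * (2 * R) * Mv) vol hptw
      refine le_trans key ?_
      rw [Real.volume_real_Icc_of_le hab]
      have hba : b - a = 2 * R := by simp [ha, hb]; ring
      rw [hba]
    -- a^(σ-2) ≤ 4 (1+x)^(σ-2)
    have h6 : a ^ (σ - 2) ≤ 4 * (1 + x) ^ (σ - 2) := by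
      have hhalf : (0:ℝ) < (1 + x) / 2 := by linarith
      have hle : (1 + x) / 2 ≤ a := by simp [ha]; linarith
      have s1 : a ^ (σ - 2) ≤ ((1 + x) / 2) ^ (σ - 2) :=
        Real.rpow_le_rpow_of_nonpos hhalf hle (by linarith)
      have s2 : ((1 + x) / 2) ^ (σ - 2) = (1 + x) ^ (σ - 2) / 2 ^ (σ - 2) :=
        Real.div_rpow (by linarith) (by norm_num) (σ - 2)
      have s3 : (2:ℝ) ^ (σ - 2) = (2 ^ (2 - σ))⁻¹ := by
        rw [← Real.rpow_neg (by norm_num)]; ring_nf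
      have s4 : (1:ℝ) ≤ 2 ^ (2 - σ) := Real.one_le_rpow (by norm_num) (by linarith)
      have s5 : (2:ℝ) ^ (2 - σ) ≤ 2 ^ (2:ℝ) :=
        Real.rpow_le_rpow_of_exponent_le (by norm_num) (by linarith)
      have s6 : (2:ℝ) ^ (2:ℝ) = 4 := by
        rw [show (2:ℝ) = ((2:ℕ):ℝ) by norm_num, Real.rpow_natCast]; norm_num
      calc a ^ (σ - 2) ≤ (1 + x) ^ (σ - 2) / 2 ^ (σ - 2) := by rw [← s2]; exact s1
        _ = (1 + x) ^ (σ - 2) * 2 ^ (2 - σ) := by rw [s3]; field_simp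
        _ ≤ (1 + x) ^ (σ - 2) * 4 := by
            apply mul_le_mul_of_nonneg_left (by rw [← s6]; exact s5)
              (Real.rpow_nonneg (by linarith) _)
        _ = 4 * (1 + x) ^ (σ - 2) := by ring
    calc |G x| ≤ ((1 - σ) * a ^ (σ - 2) * (2 * R) * Mv) * (2 * R) := h5
      _ = ((1 - σ) * (4 * R ^ 2 * Mv)) * a ^ (σ - 2) := by ring
      _ ≤ ((1 - σ) * (4 * R ^ 2 * Mv)) * (4 * (1 + x) ^ (σ - 2)) := by
          apply mul_le_mul_of_nonneg_left h6
          have : 0 ≤ 1 - σ := by linarith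
          positivity
      _ = (1 - σ) * (16 * R ^ 2 * Mv) * (1 + x) ^ (σ - 2) := by ring
  -- left vanishing
  have left0 : ∀ x : ℝ, x < -P → G x = 0 := by
    intro x hx
    rw [hGdef x]
    have : (fun t : ℝ => Kr σ t * v (x - t)) = fun _ => 0 := by
      funext t
      rcases le_or_gt t 0 with h | h
      · have : Kr σ t = 0 := Set.indicator_of_notMem (by simpa using h) _
        simp [this]
      · have : v (x - t) = 0 := by
          apply hvz
          rw [abs_of_neg (by linarith)]
          linarith
        simp [this]
    rw [this, integral_zero]
  -- combine
  set A : ℝ := 2 * R + 2 with hA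
  obtain ⟨M₂, hM₂⟩ := (isCompact_Icc (a := -A) (b := A)).exists_bound_of_continuousOn
    hGcont.continuousOn
  set M₃ : ℝ := max M₂ 0 with hM₃
  have hM₃0 : (0:ℝ) ≤ M₃ := le_max_right _ _
  have hM₂' : ∀ x ∈ Icc (-A) A, |G x| ≤ M₃ := fun x hx =>
    le_trans (by simpa using hM₂ x hx) (le_max_left _ _)
  set r : ℝ := if σ = 1 then 2 else 2 - σ with hr
  have hr1 : 1 < r := by
    by_cases h : σ = 1
    · simp [hr, h]
    · have : σ < 1 := lt_of_le_of_ne hσ1 h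
      simp only [hr, if_neg h]; linarith
  set K : ℝ := (1 - σ) * (16 * R ^ 2 * Mv) with hK
  have hK0 : 0 ≤ K := mul_nonneg (by linarith) (by positivity)
  set C : ℝ := max (M₃ * (1 + A) ^ r) K with hC
  have hA0 : (0:ℝ) < A := by simp only [hA]; linarith
  have hC0 : 0 ≤ C :=
    le_trans (mul_nonneg hM₃0 (Real.rpow_nonneg (by linarith) _)) (le_max_left _ _)
  refine ⟨C, r, hC0, hr1, ?_⟩
  intro x
  have hbase : (0:ℝ) < 1 + |x| := by positivity
  have hrpos : (0:ℝ) < (1 + |x|) ^ (-r) := Real.rpow_pos_of_pos hbase _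
  by_cases hcase1 : x ∈ Icc (-A) A
  · have h1 : (1 + |x|) ^ r ≤ (1 + A) ^ r := by
      apply Real.rpow_le_rpow (by positivity) ?_ (by linarith)
      rcases hcase1 with ⟨h1, h2⟩
      rcases abs_cases x with ⟨he, _⟩ | ⟨he, _⟩ <;> linarith
    calc |G x| ≤ M₃ := hM₂' x hcase1
      _ = M₃ * ((1 + |x|) ^ r * (1 + |x|) ^ (-r)) := by
          rw [← Real.rpow_add hbase, add_neg_cancel, Real.rpow_zero, mul_one]
      _ ≤ (M₃ * (1 + A) ^ r) * (1 + |x|) ^ (-r) := by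
          rw [← mul_assoc]
          exact mul_le_mul_of_nonneg_right (mul_le_mul_of_nonneg_left h1 hM₃0) hrpos.le
      _ ≤ C * (1 + |x|) ^ (-r) := mul_le_mul_of_nonneg_right (le_max_left _ _) hrpos.le
  · rw [mem_Icc, not_and_or] at hcase1
    rcases hcase1 with h | h
    · push_neg at h
      have : G x = 0 := left0 x (by simp only [hA] at h; linarith)
      rw [this, abs_zero]
      positivity
    · push_neg at h
      have hx : A < x := h
      have habs : |x| = x := abs_of_pos (by linarith)
      have ht := tail x (by simp only [hA] at hx; linarith)
      by_cases hσe : σ = 1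
      · have : (1 - σ) * (16 * R ^ 2 * Mv) * (1 + x) ^ (σ - 2) = 0 := by
          rw [hσe]; ring
        rw [this] at ht
        exact le_trans ht (by positivity)
      · have hre : r = 2 - σ := by simp only [hr, if_neg hσe]
        have : (1 + |x|) ^ (-r) = (1 + x) ^ (σ - 2) := by
          rw [habs, hre]; ring_nf
        rw [this]
        exact le_trans ht (mul_le_mul_of_nonneg_right (le_max_right _ _)
          (Real.rpow_nonneg (by linarith) _))

lemma memLp_of_decay (G : ℝ → ℝ) (hG : Continuous G) (C r : ℝ) (hC : 0 ≤ C) (hr : 1 < r)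
    (hbound : ∀ x, |G x| ≤ C * (1 + |x|) ^ (-r)) (p : ℝ≥0∞) (hp : 1 ≤ p) (hp' : p ≠ ⊤) :
    MemLp G p volume := by
  have hp0 : p ≠ 0 := by
    intro h; rw [h] at hp; exact absurd hp (by simp)
  have hq1 : 1 ≤ p.toReal := by
    rw [← ENNReal.toReal_one]
    exact ENNReal.toReal_mono hp' hp
  have hq0 : 0 < p.toReal := by linarith
  set q := p.toReal with hqdef
  -- integrable dominator
  have hdom : Integrable (fun x : ℝ => C ^ q * (1 + |x|) ^ (-(r * q))) volume := by
    apply Integrable.const_mul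
    have : (1:ℝ) < r * q := by nlinarith
    have h := integrable_one_add_norm (E := ℝ) (μ := volume) (r := r * q) (by simpa using this)
    simpa [Real.norm_eq_abs] using h
  have key : Integrable (fun x : ℝ => ‖G x‖ ^ q) volume := by
    apply hdom.mono' (((Real.continuous_rpow_const (by linarith : (0:ℝ) ≤ q)).comp hG.norm).aestronglyMeasurable)
    filter_upwards with x
    have habs : ‖‖G x‖ ^ q‖ = ‖G x‖ ^ q := by
      rw [Real.norm_eq_abs]
      exact abs_of_nonneg (Real.rpow_nonneg (norm_nonneg _) _)
    simp only [Function.comp_apply]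
    rw [habs]
    calc ‖G x‖ ^ q ≤ (C * (1 + |x|) ^ (-r)) ^ q := by
          apply Real.rpow_le_rpow (norm_nonneg _) (by simpa using hbound x) (by linarith)
      _ = C ^ q * ((1 + |x|) ^ (-r)) ^ q := Real.mul_rpow hC (Real.rpow_nonneg (by positivity) _)
      _ = C ^ q * (1 + |x|) ^ (-(r * q)) := by
          rw [← Real.rpow_mul (by positivity : (0:ℝ) ≤ 1 + |x|), neg_mul]
  -- conclude
  have h1 : MemLp (fun x => ‖G x‖ ^ q) (p / p) volume := by
    rw [ENNReal.div_self hp0 hp', memLp_one_iff_integrable]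
    exact key
  exact (memLp_norm_rpow_iff hG.aestronglyMeasurable hp0 hp').mp h1

lemma iterate_hasCompactSupport (u : ℝ → ℝ) (h : HasCompactSupport u) (m : ℕ) :
    HasCompactSupport (deriv^[m] u) := by
  induction m with
  | zero => exact h
  | succ m ih => rw [Function.iterate_succ_apply']; exact ih.deriv

lemma RLr_eq (σ : ℝ) (u : ℝ → ℝ) (x : ℝ) : RLr σ u x = RLl σ (fun y => u (-y)) (-x) := by
  unfold RLr RLl
  congr 1
  have h : ∫ t in Iic (-x), Real.rpow (-x - t) (σ - 1) * u (-t)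
      = ∫ t in Iic (-x), (fun s => Real.rpow (s - x) (σ - 1) * u s) (-t) := by
    congr 1; funext t; simp only; ring_nf
  rw [h, show (∫ t in Iic (-x), (fun s => Real.rpow (s - x) (σ - 1) * u s) (-t))
      = ∫ t in Ioi (-(-x)), (fun s => Real.rpow (s - x) (σ - 1) * u s) t from
        integral_comp_neg_Iic (-x) (fun s => Real.rpow (s - x) (σ - 1) * u s),
    neg_neg, ← integral_Ici_eq_integral_Ioi]

-- main left lemma
lemma memLp_left (μ : ℝ) (hμ : 0 < μ) (u : ℝ → ℝ) (hu : IsC0inf u)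
    (p : ℝ≥0∞) (hp : 1 ≤ p) (hp' : p ≠ ⊤) : MemLp (RLdL μ u) p (volume : Measure ℝ) := by
  set n : ℕ := Nat.floor μ + 1 with hn
  set σ : ℝ := (n : ℝ) - μ with hσ
  have hσ0 : 0 < σ := by
    have := Nat.lt_floor_add_one μ
    simp only [hσ, hn]; push_cast; linarith
  have hσ1 : σ ≤ 1 := by
    have := Nat.floor_le hμ.le
    simp only [hσ, hn]; push_cast; linarith
  have husm : ContDiff ℝ ∞ u := hu.1.of_le (by simp)
  have hcu : HasCompactSupport u := hu.2
  set w : ℝ → ℝ := deriv^[Nat.floor μ] u with hw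
  have hwsm : ContDiff ℝ ∞ w := husm.iterate_deriv _
  have hcw : HasCompactSupport w := iterate_hasCompactSupport u hcu _
  have hkey : RLdL μ u = fun x => (Real.Gamma σ)⁻¹
      * (Kr σ ⋆[ContinuousLinearMap.lsmul ℝ ℝ] deriv w) x := by
    unfold RLdL
    rw [show ((Nat.floor μ + 1 : ℕ) : ℝ) - μ = σ by rw [hσ, hn]]
    rw [RLl_eq_conv σ u, iterDeriv_const_mul _ n, iterDeriv_conv hσ0 n u husm hcu]
    have : deriv^[n] u = deriv w := by
      rw [hw, hn, Function.iterate_succ_apply']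
    rw [this]
  obtain ⟨C, r, hC0, hr1, hbd⟩ := conv_decay hσ0 hσ1 w hwsm hcw
  rw [hkey]
  have hvsm : ContDiff ℝ ∞ (deriv w) := (contDiff_infty_iff_deriv.mp hwsm).2
  have hcont : Continuous fun x => (Real.Gamma σ)⁻¹
      * (Kr σ ⋆[ContinuousLinearMap.lsmul ℝ ℝ] deriv w) x :=
    continuous_const.mul ((hcw.deriv.contDiff_convolution_right
      (ContinuousLinearMap.lsmul ℝ ℝ) (Kr_locInt hσ0) hvsm).continuous)
  apply memLp_of_decay _ hcont (|(Real.Gamma σ)⁻¹| * C) r (by positivity) hr1 _ p hp hp'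
  intro x
  rw [abs_mul, mul_assoc]
  exact mul_le_mul_of_nonneg_left (hbd x) (abs_nonneg _)


/-- For `μ > 0` and `u ∈ C_0^∞(ℝ)`, both R-L fractional derivatives
`D^μ u` and `D^{μ*}u` belong to `L^p(ℝ)` for every `1 ≤ p < ∞`. -/
theorem stmt1 (μ : ℝ) (hμ : 0 < μ) (u : ℝ → ℝ) (hu : IsC0inf u)
    (p : ℝ≥0∞) (hp : 1 ≤ p) (hp' : p ≠ ⊤) :
    MemLp (RLdL μ u) p (volume : Measure ℝ) ∧ MemLp (RLdR μ u) p (volume : Measure ℝ) := by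
  refine ⟨memLp_left μ hμ u hu p hp hp', ?_⟩
  set n : ℕ := Nat.floor μ + 1 with hn
  have hune : IsC0inf (fun y => u (-y)) := by
    constructor
    · exact hu.1.comp (contDiff_id.neg)
    · exact hu.2.comp_homeomorph (Homeomorph.neg ℝ)
  have hRr : RLdR μ u = fun x => RLdL μ (fun y => u (-y)) (-x) := by
    funext x
    unfold RLdR RLdL
    have h1 : RLr ((n : ℝ) - μ) u = fun z => RLl ((n : ℝ) - μ) (fun y => u (-y)) (-z) := by
      funext z; exact RLr_eq _ u z
    rw [show ((Nat.floor μ + 1 : ℕ) : ℝ) - μ = (n : ℝ) - μ by rw [hn]]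
    rw [h1, iterDeriv_comp_neg n (RLl ((n : ℝ) - μ) fun y => u (-y))]
    simp only [← hn]
    rw [← mul_assoc, ← mul_pow]
    norm_num
  rw [hRr]
  have hmem := memLp_left μ hμ (fun y => u (-y)) hune p hp hp'
  have : (fun x => RLdL μ (fun y => u (-y)) (-x))
      = (RLdL μ (fun y => u (-y))) ∘ (fun x : ℝ => -x) := rfl
  rw [this]
  exact hmem.comp_measurePreserving (Measure.measurePreserving_neg _)
end

section
/- For 0 < s < 1/2 and ψ ∈ C_0^∞(ℝ), the L² inner product of the left fractional integral with the right fractional derivative satisfies (D^{-s}ψ, D^{s*}ψ) = ‖ψ‖²_{L²(ℝ)}. -/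
open MeasureTheory Filter Set
open scoped FourierTransform Real Topology ENNReal Classical

section Aux
open intervalIntegral


lemma betaKer_intervalIntegrable {s L : ℝ} (h0 : 0 < s) (h1 : s < 1) (hL : 0 < L) :
    IntervalIntegrable (fun y : ℝ => y ^ (s - 1) * (L - y) ^ (-s)) volume 0 L := by
  have h2 : (0:ℝ) < L/2 := by linarith
  apply IntervalIntegrable.trans (b := L/2)
  · -- on [0, L/2] : y^(s-1) integrable, (L-y)^(-s) continuous
    apply IntervalIntegrable.mul_continuousOn
    · exact intervalIntegral.intervalIntegrable_rpow' (by linarith)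
    · apply ContinuousOn.rpow_const
      · fun_prop
      · intro y hy
        rw [uIcc_of_le (by linarith)] at hy
        left
        have := hy.2
        intro h
        nlinarith [hy.1, hy.2]
  · -- on [L/2, L] : (L-y)^(-s) integrable, y^(s-1) continuous
    apply IntervalIntegrable.continuousOn_mul
    · have : IntervalIntegrable (fun y : ℝ => y ^ (-s)) volume (L - L/2) (L - L) := by
        simpa using intervalIntegral.intervalIntegrable_rpow' (r := -s) (by linarith)
      simpa using this.comp_sub_left L
    · apply ContinuousOn.rpow_const
      · fun_prop
      · intro y hy
        rw [uIcc_of_le (by linarith)] at hy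
        left; nlinarith [hy.1]

lemma betaKer_integral {s L : ℝ} (h0 : 0 < s) (h1 : s < 1) (hL : 0 < L) :
    ∫ y in (0:ℝ)..L, y ^ (s - 1) * (L - y) ^ (-s) = Real.Gamma s * Real.Gamma (1 - s) := by
  have hc := Complex.betaIntegral_scaled (s:ℂ) (1 - (s:ℂ)) hL
  have he : (s:ℂ) + (1 - (s:ℂ)) - 1 = 0 := by ring
  rw [he, Complex.cpow_zero, one_mul] at hc
  have hb : Complex.betaIntegral (s:ℂ) (1 - (s:ℂ)) = (Real.Gamma s : ℂ) * (Real.Gamma (1-s) : ℂ) := by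
    have := Complex.Gamma_mul_Gamma_eq_betaIntegral (s := (s:ℂ)) (t := 1 - (s:ℂ))
      (by simpa using h0) (by simp [Complex.sub_re]; linarith)
    rw [show (s:ℂ) + (1 - (s:ℂ)) = 1 by ring, Complex.Gamma_one, one_mul] at this
    rw [← this, ← Complex.Gamma_ofReal, ← Complex.Gamma_ofReal]
    norm_cast
  rw [hb] at hc
  have hre : ((∫ y in (0:ℝ)..L, y ^ (s - 1) * (L - y) ^ (-s) : ℝ) : ℂ)
      = ∫ y in (0:ℝ)..L, (((y:ℝ) ^ (s - 1) * (L - y) ^ (-s) : ℝ) : ℂ) :=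
    (intervalIntegral.integral_ofReal (f := fun y : ℝ => (y:ℝ) ^ (s - 1) * (L - y) ^ (-s))).symm
  have hcongr : (∫ y in (0:ℝ)..L, (((y:ℝ) ^ (s - 1) * (L - y) ^ (-s) : ℝ) : ℂ))
      = ∫ y in (0:ℝ)..L, ((y:ℂ) ^ ((s:ℂ) - 1) * (((L:ℝ):ℂ) - y) ^ (1 - (s:ℂ) - 1)) := by
    rw [intervalIntegral.integral_of_le hL.le, intervalIntegral.integral_of_le hL.le]
    apply setIntegral_congr_fun measurableSet_Ioc
    intro y hy
    have hy0 : (0:ℝ) ≤ y := hy.1.le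
    have hy1 : (0:ℝ) ≤ L - y := by linarith [hy.2]
    push_cast
    rw [Complex.ofReal_cpow hy0, Complex.ofReal_cpow hy1]
    push_cast
    ring_nf
  have := hre.trans (hcongr.trans hc)
  exact_mod_cast this

lemma RLr_repr (σ : ℝ) (u : ℝ → ℝ) (x : ℝ) :
    RLr σ u x = (Real.Gamma σ)⁻¹ * ∫ y in Ioi (0:ℝ), y ^ (σ - 1) * u (x + y) := by
  unfold RLr
  congr 1
  rw [← MeasureTheory.integral_indicator measurableSet_Ici,
    ← integral_add_right_eq_self (μ := (volume : Measure ℝ))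
      (Set.indicator (Ici x) fun t => Real.rpow (t - x) (σ - 1) * u t) x]
  rw [← integral_Ici_eq_integral_Ioi, ← MeasureTheory.integral_indicator measurableSet_Ici]
  congr 1
  funext y
  by_cases h : 0 ≤ y
  · rw [Set.indicator_of_mem (by simpa using h), Set.indicator_of_mem (by simpa using h)]
    show Real.rpow (y + x - x) (σ - 1) * u (y + x) = y ^ (σ - 1) * u (x + y)
    rw [add_sub_cancel_right, add_comm x y]
    rfl
  · rw [Set.indicator_of_notMem (by simpa using h), Set.indicator_of_notMem (by simpa using h)]

lemma aux_int {σ : ℝ} (h0 : 0 < σ) {v : ℝ → ℝ} (hv : Continuous v) (hvs : HasCompactSupport v)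
    (x : ℝ) : IntegrableOn (fun y => y ^ (σ - 1) * v (x + y)) (Ioi (0:ℝ)) := by
  obtain ⟨M, hM⟩ := hvs.isBounded.subset_closedBall 0
  obtain ⟨C, hC⟩ := hvs.exists_bound_of_continuous hv
  set R : ℝ := |M| + |x| + 1 with hR
  have hR0 : 0 < R := by positivity
  have hvan : ∀ y : ℝ, R < y → v (x + y) = 0 := by
    intro y hy
    apply image_eq_zero_of_notMem_tsupport
    intro hmem
    have := hM hmem
    rw [Real.closedBall_eq_Icc] at this
    have h1 : x + y ≤ 0 + M := this.2
    have : y ≤ M - x := by linarith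
    have : M - x ≤ |M| + |x| := by
      have := le_abs_self M; have := neg_abs_le x; linarith [neg_le_abs x, le_abs_self M]
    linarith
  have hmeas : AEStronglyMeasurable (fun y : ℝ => y ^ (σ - 1) * v (x + y))
      (volume.restrict (Ioi (0:ℝ))) := by
    apply AEStronglyMeasurable.mul
    · exact (by fun_prop : Measurable (fun y : ℝ => y ^ (σ-1))).aestronglyMeasurable
    · exact (hv.comp (continuous_const.add continuous_id)).aestronglyMeasurable
  have : Ioi (0:ℝ) ⊆ Ioc 0 R ∪ Ioi R := by
    intro y hy; by_cases h : y ≤ R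
    · exact Or.inl ⟨hy, h⟩
    · exact Or.inr (by simpa using lt_of_not_ge h)
  apply IntegrableOn.mono_set _ this
  apply IntegrableOn.union
  · have hint : IntegrableOn (fun y : ℝ => y ^ (σ - 1)) (Ioc (0:ℝ) R) := by
      rw [← intervalIntegrable_iff_integrableOn_Ioc_of_le hR0.le]
      exact intervalIntegral.intervalIntegrable_rpow' (by linarith)
    apply Integrable.mono' (hint.mul_const C)
    · apply AEStronglyMeasurable.mul
      · exact (by fun_prop : Measurable (fun y : ℝ => y ^ (σ-1))).aestronglyMeasurable
      · exact (hv.comp (continuous_const.add continuous_id)).aestronglyMeasurable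
    · filter_upwards [ae_restrict_mem measurableSet_Ioc] with y hy
      rw [norm_mul, Real.norm_rpow_of_nonneg hy.1.le, Real.norm_eq_abs, abs_of_pos hy.1]
      exact mul_le_mul_of_nonneg_left (hC (x + y)) (Real.rpow_nonneg hy.1.le _)
  · apply (integrableOn_congr_fun _ measurableSet_Ioi).mpr (integrableOn_zero)
    intro y hy
    simp [hvan y hy]

lemma hasDerivAt_RLr {σ : ℝ} (h0 : 0 < σ) {ψ : ℝ → ℝ} (hc : ContDiff ℝ (⊤ : ℕ∞) ψ)
    (hs : HasCompactSupport ψ) (x₀ : ℝ) :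
    HasDerivAt (RLr σ ψ) (RLr σ (deriv ψ) x₀) x₀ := by
  have hdc : Continuous (deriv ψ) := hc.continuous_deriv (by simp)
  have hds : HasCompactSupport (deriv ψ) := hs.deriv
  have hrepr : RLr σ ψ = fun x => (Real.Gamma σ)⁻¹ * ∫ y in Ioi (0:ℝ), y ^ (σ - 1) * ψ (x + y) :=
    funext (RLr_repr σ ψ)
  rw [hrepr, RLr_repr]
  obtain ⟨M, hM⟩ := hds.isBounded.subset_closedBall 0
  obtain ⟨C, hC⟩ := hds.exists_bound_of_continuous hdc
  set R : ℝ := |M| + |x₀| + 2 with hRdef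
  have hR0 : 0 < R := by positivity
  have key := _root_.hasDerivAt_integral_of_dominated_loc_of_deriv_le
    (μ := volume.restrict (Ioi (0:ℝ)))
    (F := fun x y => y ^ (σ - 1) * ψ (x + y))
    (F' := fun x y => y ^ (σ - 1) * deriv ψ (x + y))
    (x₀ := x₀)
    (bound := (Ioc (0:ℝ) R).indicator (fun y => y ^ (σ - 1) * C))
    (s := Metric.ball x₀ 1) (Metric.ball_mem_nhds x₀ one_pos)
    (Filter.Eventually.of_forall fun x => by
      apply AEStronglyMeasurable.mul
      · exact (by fun_prop : Measurable (fun y : ℝ => y ^ (σ-1))).aestronglyMeasurable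
      · exact (hc.continuous.comp (continuous_const.add continuous_id)).aestronglyMeasurable)
    (aux_int h0 hc.continuous hs x₀)
    (by
      apply AEStronglyMeasurable.mul
      · exact (by fun_prop : Measurable (fun y : ℝ => y ^ (σ-1))).aestronglyMeasurable
      · exact (hdc.comp (continuous_const.add continuous_id)).aestronglyMeasurable)
    (by
      filter_upwards [ae_restrict_mem measurableSet_Ioi] with y hy
      intro x hx
      by_cases hyR : y ≤ R
      · rw [Set.indicator_of_mem (show y ∈ Ioc (0:ℝ) R from ⟨hy, hyR⟩)]
        rw [norm_mul, Real.norm_rpow_of_nonneg (le_of_lt hy), Real.norm_eq_abs,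
          abs_of_pos hy]
        exact mul_le_mul_of_nonneg_left (hC (x + y)) (Real.rpow_nonneg (le_of_lt hy) _)
      · rw [Set.indicator_of_notMem (fun hmem => hyR hmem.2)]
        have hxy : deriv ψ (x + y) = 0 := by
          apply image_eq_zero_of_notMem_tsupport
          intro hmem
          have h1 : ‖x + y‖ ≤ M := by simpa [Real.dist_eq] using hM hmem
          have h2 : x₀ - 1 < x := by
            have := hx
            rw [Metric.mem_ball, Real.dist_eq, abs_lt] at this
            linarith [this.1]
          have h3 : R < y := lt_of_not_ge hyR
          have h4 : |M| + 1 < x + y := by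
            have := neg_abs_le x₀
            rw [hRdef] at h3
            linarith
          have h5 : x + y ≤ |x + y| := le_abs_self _
          rw [Real.norm_eq_abs] at h1
          linarith [le_abs_self M, h1.trans (le_abs_self M)]
        simp [hxy])
    (by
      apply Integrable.restrict
      apply (IntegrableOn.integrable_indicator _ measurableSet_Ioc)
      have hint : IntegrableOn (fun y : ℝ => y ^ (σ - 1)) (Ioc (0:ℝ) R) := by
        rw [← intervalIntegrable_iff_integrableOn_Ioc_of_le hR0.le]
        exact intervalIntegral.intervalIntegrable_rpow' (by linarith)
      exact hint.mul_const C)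
    (by
      apply Filter.Eventually.of_forall
      intro y x hx
      have h1 : HasDerivAt (fun x : ℝ => x + y) 1 x := (hasDerivAt_id x).add_const y
      have h2 : HasDerivAt ψ (deriv ψ (x + y)) (x + y) :=
        ((hc.differentiable (by simp)) (x + y)).hasDerivAt
      have := h2.comp x h1
      simpa using (this.const_mul ((y:ℝ) ^ (σ - 1))))
  exact key.2.const_mul _

end Aux

section Kern
open intervalIntegral

lemma kern_eq {s : ℝ} (h0 : 0 < s) (h1 : s < 1) (t u x : ℝ) :
    (if t ≤ x then (x - t) ^ (s - 1) else 0) * (if x ≤ u then (u - x) ^ (-s) else 0)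
    = (Ioo t u).indicator (fun x => (x - t) ^ (s - 1) * (u - x) ^ (-s)) x := by
  have hs1 : s - 1 ≠ 0 := by intro h; linarith [h]
  have hs2 : -s ≠ 0 := by intro h; linarith [neg_eq_zero.mp h]
  by_cases hxt : t ≤ x
  · by_cases hxu : x ≤ u
    · rcases eq_or_lt_of_le hxt with h | h
      · have hx : x ∉ Ioo t u := fun hm => absurd hm.1 (by rw [h]; exact lt_irrefl x)
        rw [Set.indicator_of_notMem hx, h, if_pos (le_refl x), sub_self,
          Real.zero_rpow hs1, zero_mul]
      · rcases eq_or_lt_of_le hxu with h' | h'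
        · have hx : x ∉ Ioo t u := fun hm => absurd hm.2 (by rw [h']; exact lt_irrefl u)
          rw [Set.indicator_of_notMem hx, ← h', if_pos (le_refl x), sub_self,
            Real.zero_rpow hs2, mul_zero]
        · rw [if_pos hxt, if_pos hxu, Set.indicator_of_mem (Set.mem_Ioo.mpr ⟨h, h'⟩)]
    · rw [if_neg hxu, mul_zero, Set.indicator_of_notMem (fun hm => hxu hm.2.le)]
  · rw [if_neg hxt, zero_mul, Set.indicator_of_notMem (fun hm => hxt hm.1.le)]

lemma kern_fun_eq (t u : ℝ) (s : ℝ) :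
    (fun x : ℝ => (x - t) ^ (s - 1) * ((u - t) - (x - t)) ^ (-s))
    = fun x : ℝ => (x - t) ^ (s - 1) * (u - x) ^ (-s) := by
  funext x; rw [sub_sub_sub_cancel_right]

lemma kern_integrable {s : ℝ} (h0 : 0 < s) (h1 : s < 1) (t u : ℝ) :
    Integrable ((Ioo t u).indicator (fun x => (x - t) ^ (s - 1) * (u - x) ^ (-s))) := by
  rw [integrable_indicator_iff measurableSet_Ioo]
  by_cases h : t < u
  · have hL : 0 < u - t := sub_pos.mpr h
    have hII := (betaKer_intervalIntegrable h0 h1 hL).comp_sub_right t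
    rw [zero_add] at hII
    rw [show u - t + t = u by ring] at hII
    have hIO : IntegrableOn (fun x : ℝ => (x - t) ^ (s - 1) * ((u - t) - (x - t)) ^ (-s))
        (Ioc t u) := (intervalIntegrable_iff_integrableOn_Ioc_of_le (le_of_lt h)).mp hII
    rw [kern_fun_eq] at hIO
    exact hIO.mono_set Ioo_subset_Ioc_self
  · rw [Set.Ioo_eq_empty h]
    simp

lemma kern_integral {s : ℝ} (h0 : 0 < s) (h1 : s < 1) (t u : ℝ) :
    ∫ x, (Ioo t u).indicator (fun x => (x - t) ^ (s - 1) * (u - x) ^ (-s)) x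
    = if t < u then Real.Gamma s * Real.Gamma (1 - s) else 0 := by
  rw [MeasureTheory.integral_indicator measurableSet_Ioo]
  by_cases h : t < u
  · rw [if_pos h]
    have hL : 0 < u - t := sub_pos.mpr h
    rw [← MeasureTheory.integral_Ioc_eq_integral_Ioo, ← intervalIntegral.integral_of_le h.le]
    rw [← kern_fun_eq t u s]
    have := intervalIntegral.integral_comp_sub_right
      (fun y : ℝ => y ^ (s - 1) * ((u - t) - y) ^ (-s)) t (a := t) (b := u)
    rw [this, sub_self]
    exact betaKer_integral h0 h1 hL
  · rw [if_neg h, Set.Ioo_eq_empty h]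
    simp

end Kern

lemma RLdR_eq {s : ℝ} (h0 : 0 < s) (h1 : s < 1/2) {ψ : ℝ → ℝ} (hψ : IsC0inf ψ) (x : ℝ) :
    RLdR s ψ x = -(RLr (1 - s) (deriv ψ) x) := by
  have hfl : Nat.floor s = 0 := Nat.floor_eq_zero.mpr (by linarith)
  unfold RLdR
  rw [hfl]
  rw [show ((0 + 1 : ℕ) : ℝ) - s = 1 - s by norm_num]
  rw [pow_one, Function.iterate_one]
  rw [(hasDerivAt_RLr (by linarith : (0:ℝ) < 1 - s) hψ.1 hψ.2 x).deriv]
  ring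

/-- For `0 < s < 1/2` and `ψ ∈ C_0^∞(ℝ)`,
`(D^{-s}ψ, D^{s*}ψ) = ‖ψ‖²_{L²(ℝ)}`. -/
theorem stmt9 (s : ℝ) (h0 : 0 < s) (h1 : s < 1/2) (ψ : ℝ → ℝ) (hψ : IsC0inf ψ) :
    ∫ x : ℝ, RLl s ψ x * RLdR s ψ x = ∫ x : ℝ, ψ x ^ 2 := by
  have hs1 : s < 1 := by linarith
  have hσ0 : (0:ℝ) < 1 - s := by linarith
  set dψ := deriv ψ with hdψdef
  have hψc : Continuous ψ := hψ.1.continuous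
  have hdc : Continuous dψ := hψ.1.continuous_deriv (by simp)
  have hds : HasCompactSupport dψ := hψ.2.deriv
  have hψint : Integrable ψ := hψc.integrable_of_hasCompactSupport hψ.2
  have hdint : Integrable dψ := hdc.integrable_of_hasCompactSupport hds
  set B := Real.Gamma s * Real.Gamma (1 - s) with hBdef
  have hBpos : 0 < B := mul_pos (Real.Gamma_pos_of_pos h0) (Real.Gamma_pos_of_pos hσ0)
  set c1 := (Real.Gamma s)⁻¹ with hc1
  set c2 := (Real.Gamma (1 - s))⁻¹ with hc2
  set k1 : ℝ → ℝ → ℝ := fun x t => (if t ≤ x then (x - t) ^ (s - 1) else 0) * ψ t with hk1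
  set k2 : ℝ → ℝ → ℝ := fun x u => (if x ≤ u then (u - x) ^ (-s) else 0) * dψ u with hk2
  have hF : ∀ x, RLl s ψ x = c1 * ∫ t, k1 x t := by
    intro x
    unfold RLl
    congr 1
    rw [← MeasureTheory.integral_indicator measurableSet_Iic]
    congr 1
    funext t
    by_cases h : t ≤ x
    · rw [Set.indicator_of_mem (Set.mem_Iic.mpr h)]
      simp only [hk1, if_pos h]
      rfl
    · rw [Set.indicator_of_notMem (by simpa using h)]
      simp only [hk1, if_neg h, zero_mul]
  have hG : ∀ x, RLr (1 - s) dψ x = c2 * ∫ u, k2 x u := by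
    intro x
    unfold RLr
    congr 1
    rw [← MeasureTheory.integral_indicator measurableSet_Ici]
    congr 1
    funext u
    by_cases h : x ≤ u
    · rw [Set.indicator_of_mem (Set.mem_Ici.mpr h)]
      simp only [hk2, if_pos h]
      show Real.rpow (u - x) (1 - s - 1) * dψ u = (u - x) ^ (-s) * dψ u
      rw [show (1 : ℝ) - s - 1 = -s by ring]
      rfl
    · rw [Set.indicator_of_notMem (by simpa using h)]
      simp only [hk2, if_neg h, zero_mul]
  have hkernel : ∀ (x t u : ℝ), k1 x t * k2 x u =
      (ψ t * dψ u) * (Ioo t u).indicator (fun x => (x - t) ^ (s - 1) * (u - x) ^ (-s)) x := by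
    intro x t u
    rw [← kern_eq h0 hs1 t u x]
    simp only [hk1, hk2]
    ring
  have hindnn : ∀ (t u x : ℝ),
      0 ≤ (Ioo t u).indicator (fun x => (x - t) ^ (s - 1) * (u - x) ^ (-s)) x := by
    intro t u x
    apply Set.indicator_nonneg
    intro y hy
    exact mul_nonneg (Real.rpow_nonneg (by linarith [hy.1]) _)
      (Real.rpow_nonneg (by linarith [hy.2]) _)
  have hmW : Measurable (fun z : ℝ × ℝ × ℝ => k1 z.1 z.2.1 * k2 z.1 z.2.2) := by
    have m1 : Measurable (fun z : ℝ × ℝ × ℝ =>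
        if z.2.1 ≤ z.1 then (z.1 - z.2.1) ^ (s - 1) else 0) :=
      Measurable.ite (measurableSet_le (measurable_snd.comp measurable_id |>.fst) measurable_fst)
        (((by fun_prop : Measurable fun w : ℝ => w ^ (s - 1))).comp
          (measurable_fst.sub measurable_snd.fst)) measurable_const
    have m2 : Measurable (fun z : ℝ × ℝ × ℝ =>
        if z.1 ≤ z.2.2 then (z.2.2 - z.1) ^ (-s) else 0) :=
      Measurable.ite (measurableSet_le measurable_fst measurable_snd.snd)
        (((by fun_prop : Measurable fun w : ℝ => w ^ (-s))).comp
          (measurable_snd.snd.sub measurable_fst)) measurable_const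
    exact (m1.mul (hψc.measurable.comp measurable_snd.fst)).mul
      (m2.mul (hdc.measurable.comp measurable_snd.snd))
  have hW : Integrable (Function.uncurry fun (x : ℝ) (p : ℝ × ℝ) => k1 x p.1 * k2 x p.2)
      ((volume : Measure ℝ).prod (volume : Measure (ℝ × ℝ))) := by
    constructor
    · exact hmW.aestronglyMeasurable
    · rw [hasFiniteIntegral_iff_norm]
      show (∫⁻ z : ℝ × ℝ × ℝ, ENNReal.ofReal ‖k1 z.1 z.2.1 * k2 z.1 z.2.2‖
        ∂((volume : Measure ℝ).prod (volume : Measure (ℝ × ℝ)))) < ⊤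
      have hmW' : AEMeasurable (fun z : ℝ × ℝ × ℝ => ENNReal.ofReal ‖k1 z.1 z.2.1 * k2 z.1 z.2.2‖)
          ((volume : Measure ℝ).prod (volume : Measure (ℝ × ℝ))) :=
        (hmW.norm.ennreal_ofReal).aemeasurable
      rw [MeasureTheory.lintegral_prod_symm _ hmW']
      have hbound : ∀ p : ℝ × ℝ, (∫⁻ x : ℝ, ENNReal.ofReal ‖k1 x p.1 * k2 x p.2‖)
          ≤ ENNReal.ofReal (|ψ p.1| * |dψ p.2|) * ENNReal.ofReal B := by
        intro p
        have h1 : ∀ x : ℝ, ENNReal.ofReal ‖k1 x p.1 * k2 x p.2‖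
            = ENNReal.ofReal (|ψ p.1| * |dψ p.2|) * ENNReal.ofReal
              ((Ioo p.1 p.2).indicator (fun x => (x - p.1) ^ (s - 1) * (p.2 - x) ^ (-s)) x) := by
          intro x
          rw [hkernel x p.1 p.2, Real.norm_eq_abs, abs_mul, abs_of_nonneg (hindnn _ _ _),
            ENNReal.ofReal_mul (abs_nonneg _), abs_mul]
        simp only [h1]
        rw [MeasureTheory.lintegral_const_mul' _ _ ENNReal.ofReal_ne_top]
        have h2 : (∫⁻ x : ℝ, ENNReal.ofReal
            ((Ioo p.1 p.2).indicator (fun x => (x - p.1) ^ (s - 1) * (p.2 - x) ^ (-s)) x))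
            = ENNReal.ofReal (if p.1 < p.2 then B else 0) := by
          rw [← MeasureTheory.ofReal_integral_eq_lintegral_ofReal (kern_integrable h0 hs1 p.1 p.2)
            (Filter.Eventually.of_forall (hindnn p.1 p.2)), kern_integral h0 hs1 p.1 p.2]
        rw [h2]
        apply mul_le_mul_right
        apply ENNReal.ofReal_le_ofReal
        by_cases h : p.1 < p.2
        · rw [if_pos h]
        · rw [if_neg h]; exact hBpos.le
      calc (∫⁻ p : ℝ × ℝ, ∫⁻ x : ℝ, ENNReal.ofReal ‖k1 x p.1 * k2 x p.2‖)
          ≤ ∫⁻ p : ℝ × ℝ, ENNReal.ofReal (|ψ p.1| * |dψ p.2|) * ENNReal.ofReal B :=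
            lintegral_mono hbound
        _ = (∫⁻ p : ℝ × ℝ, ENNReal.ofReal (|ψ p.1| * |dψ p.2|)) * ENNReal.ofReal B :=
            MeasureTheory.lintegral_mul_const' _ _ ENNReal.ofReal_ne_top
        _ < ⊤ := by
            apply ENNReal.mul_lt_top _ ENNReal.ofReal_lt_top
            simp_rw [ENNReal.ofReal_mul (abs_nonneg _)]
            rw [Measure.volume_eq_prod, MeasureTheory.lintegral_prod_mul
              (hψc.measurable.abs.ennreal_ofReal).aemeasurable
              (hdc.measurable.abs.ennreal_ofReal).aemeasurable]
            exact ENNReal.mul_lt_top hψint.abs.lintegral_lt_top hdint.abs.lintegral_lt_top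
  have hIoi : ∀ t : ℝ, ∫ u in Ioi t, dψ u = -ψ t := by
    intro t
    obtain ⟨M, hM⟩ := hψ.2.isBounded.subset_closedBall 0
    have hzero : ∀ x : ℝ, M < x → ψ x = 0 := by
      intro x hx
      apply image_eq_zero_of_notMem_tsupport
      intro hmem
      have : |x| ≤ M := by simpa [Real.dist_eq] using hM hmem
      linarith [le_abs_self x]
    have htend : Tendsto ψ atTop (𝓝 (0:ℝ)) := by
      apply Tendsto.congr' _ (tendsto_const_nhds (x := (0:ℝ)))
      filter_upwards [Filter.eventually_gt_atTop M] with x hx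
      exact (hzero x hx).symm
    have := integral_Ioi_of_hasDerivAt_of_tendsto' (a := t) (f := ψ) (f' := dψ)
      (fun x _ => ((hψ.1.differentiable (by simp)) x).hasDerivAt) hdint.integrableOn htend
    rw [this, zero_sub]
  have hinner : ∀ t : ℝ, (∫ u, (ψ t * dψ u) * (if t < u then B else 0)) = -(B * ψ t ^ 2) := by
    intro t
    have heq : ∀ u : ℝ, (ψ t * dψ u) * (if t < u then B else 0)
        = (Ioi t).indicator (fun u => (ψ t * B) * dψ u) u := by
      intro u
      by_cases h : t < u
      · rw [if_pos h, Set.indicator_of_mem (Set.mem_Ioi.mpr h)]; ring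
      · rw [if_neg h, Set.indicator_of_notMem (by simpa using h), mul_zero]
    rw [MeasureTheory.integral_congr_ae (Filter.Eventually.of_forall heq),
      MeasureTheory.integral_indicator measurableSet_Ioi, MeasureTheory.integral_const_mul,
      hIoi t]
    ring
  have hInt2 : Integrable (fun p : ℝ × ℝ => (ψ p.1 * dψ p.2) * (if p.1 < p.2 then B else 0))
      ((volume : Measure ℝ).prod (volume : Measure ℝ)) := by
    apply Integrable.mono' ((hψint.abs.mul_prod hdint.abs).mul_const B)
    · exact (((hψc.measurable.comp measurable_fst).mul (hdc.measurable.comp measurable_snd)).mul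
        (Measurable.ite (measurableSet_lt measurable_fst measurable_snd) measurable_const
          measurable_const)).aestronglyMeasurable
    · apply Filter.Eventually.of_forall
      intro p
      rw [Real.norm_eq_abs, abs_mul, abs_mul]
      apply mul_le_mul_of_nonneg_left _ (mul_nonneg (abs_nonneg _) (abs_nonneg _))
      by_cases h : p.1 < p.2
      · rw [if_pos h, abs_of_pos hBpos]
      · rw [if_neg h, abs_zero]; exact hBpos.le
  calc ∫ x : ℝ, RLl s ψ x * RLdR s ψ x
      = ∫ x : ℝ, (-(c1 * c2)) * ∫ p : ℝ × ℝ, k1 x p.1 * k2 x p.2 := by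
        congr 1
        funext x
        rw [RLdR_eq h0 h1 hψ x, hF x, hG x, Measure.volume_eq_prod,
          MeasureTheory.integral_prod_mul (f := fun t => k1 x t) (g := fun u => k2 x u)]
        ring
    _ = (-(c1 * c2)) * ∫ x : ℝ, ∫ p : ℝ × ℝ, k1 x p.1 * k2 x p.2 := by
        rw [MeasureTheory.integral_const_mul]
    _ = (-(c1 * c2)) * ∫ p : ℝ × ℝ, ∫ x : ℝ, k1 x p.1 * k2 x p.2 := by
        rw [MeasureTheory.integral_integral_swap hW]
    _ = (-(c1 * c2)) * ∫ p : ℝ × ℝ, (ψ p.1 * dψ p.2) * (if p.1 < p.2 then B else 0) := by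
        congr 1
        apply MeasureTheory.integral_congr_ae
        apply Filter.Eventually.of_forall
        intro p
        simp only [hkernel]
        rw [MeasureTheory.integral_const_mul, kern_integral h0 hs1 p.1 p.2, ← hBdef]
    _ = (-(c1 * c2)) * ∫ t : ℝ, -(B * ψ t ^ 2) := by
        congr 1
        rw [Measure.volume_eq_prod, MeasureTheory.integral_prod _ hInt2]
        congr 1
        funext t
        exact hinner t
    _ = ∫ x : ℝ, ψ x ^ 2 := by
        rw [integral_neg, MeasureTheory.integral_const_mul]
        have hg1 : Real.Gamma s ≠ 0 := (Real.Gamma_pos_of_pos h0).ne'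
        have hg2 : Real.Gamma (1 - s) ≠ 0 := (Real.Gamma_pos_of_pos hσ0).ne'
        rw [hc1, hc2, hBdef]
        field_simp
end
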